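/- arXiv:1707.01639 — 3 statements merged into one kernel-verified Lean document; each statement's English description precedes it below -/
import Mathlib

section
/- Let $1 < q_1 < q_2 < \infty$ and let $\omega$ be an $A_\infty$ weight on $\mathbb{R}^n$. If $f \in L^1_{loc}(\mathbb{R}^n)$ satisfies, for every cube $Q$ and every $\lambda > 0$, $\omega(\{x \in Q : |f(x)-f_Q| > \lambda\,\omega(x)\}) \leq M^{q_2} \omega(Q) \lambda^{-q_2}$ for some constant $M$, then for every cube $Q$, $\left(\frac{1}{\omega(Q)}\int_Q |f(x)-f_Q|^{q_1}\omega(x)^{1-q_1}\,dx\right)^{1/q_1} \leq 2\left(\frac{q_1}{q_2-q_1}\right)^{1/q_2} M$. -/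
open MeasureTheory Real
noncomputable section

abbrev Rn (n : ℕ) := EuclideanSpace ℝ (Fin n)

def cube {n : ℕ} (c : Rn n) (r : ℝ) : Set (Rn n) := {y | ∀ i, |y i - c i| ≤ r / 2}

def wMeas {n : ℕ} (ω : Rn n → ℝ) (S : Set (Rn n)) : ℝ := ∫ x in S, ω x

def avg {n : ℕ} (f : Rn n → ℝ) (c : Rn n) (r : ℝ) : ℝ := (∫ x in cube c r, f x) / r ^ n

def IsA1 {n : ℕ} (ω : Rn n → ℝ) (A : ℝ) : Prop :=
  (∀ x, 0 < ω x) ∧ LocallyIntegrable ω volume ∧ 1 ≤ A ∧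
  ∀ (c : Rn n) (r : ℝ), 0 < r →
    ∀ᵐ x ∂(volume : Measure (Rn n)), x ∈ cube c r → wMeas ω (cube c r) / r ^ n ≤ A * ω x

def IsAp {n : ℕ} (ω : Rn n → ℝ) (p A : ℝ) : Prop :=
  (∀ x, 0 < ω x) ∧ LocallyIntegrable ω volume ∧
  ∀ (c : Rn n) (r : ℝ), 0 < r →
    (wMeas ω (cube c r) / r ^ n) *
      ((∫ x in cube c r, ω x ^ (-(1 / (p - 1)))) / r ^ n) ^ (p - 1) ≤ A

def IsAinf {n : ℕ} (ω : Rn n → ℝ) : Prop := ∃ p A, 1 < p ∧ IsAp ω p A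

namespace Stmt0Aux

open Set

variable {n : ℕ}

lemma abs_le_dist (y c : Rn n) (i : Fin n) : |y i - c i| ≤ dist y c := by
  rw [EuclideanSpace.dist_eq]
  have h1 : dist (y i) (c i) ^ 2 ≤ ∑ j, dist (y j) (c j) ^ 2 :=
    Finset.single_le_sum (f := fun j => dist (y j) (c j) ^ 2)
      (fun j _ => sq_nonneg _) (Finset.mem_univ i)
  have h2 : dist (y i) (c i) ≤ Real.sqrt (∑ j, dist (y j) (c j) ^ 2) := by
    calc dist (y i) (c i) = Real.sqrt (dist (y i) (c i) ^ 2) := by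
            rw [Real.sqrt_sq dist_nonneg]
      _ ≤ _ := Real.sqrt_le_sqrt h1
  simpa [Real.dist_eq] using h2

lemma cube_isClosed (c : Rn n) (r : ℝ) : IsClosed (cube c r) := by
  have : cube c r = ⋂ i, {y : Rn n | |y i - c i| ≤ r / 2} := by
    ext y; simp [cube, Set.mem_iInter]
  rw [this]
  refine isClosed_iInter fun i => ?_
  have hc : Continuous fun y : Rn n => |y i - c i| :=
    (((EuclideanSpace.proj (𝕜 := ℝ) i).continuous).sub continuous_const).abs
  exact isClosed_le hc continuous_const

lemma ball_subset_cube (c : Rn n) (r : ℝ) : Metric.ball c (r / 2) ⊆ cube c r := by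
  intro y hy i
  exact le_trans (abs_le_dist y c i) (le_of_lt (Metric.mem_ball.mp hy))

lemma cube_subset_closedBall (c : Rn n) {r : ℝ} (hr : 0 ≤ r) :
    cube c r ⊆ Metric.closedBall c (Real.sqrt n * (r / 2)) := by
  intro y hy
  rw [Metric.mem_closedBall, EuclideanSpace.dist_eq]
  have h1 : ∑ j, dist (y j) (c j) ^ 2 ≤ (n : ℝ) * (r / 2) ^ 2 := by
    calc ∑ j, dist (y j) (c j) ^ 2 ≤ ∑ _j : Fin n, (r / 2) ^ 2 := by
          refine Finset.sum_le_sum fun j _ => ?_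
          have := hy j
          rw [Real.dist_eq]
          exact pow_le_pow_left₀ (abs_nonneg _) this 2
      _ = (n : ℝ) * (r / 2) ^ 2 := by simp [Finset.sum_const, Finset.card_univ, mul_comm]
  calc Real.sqrt (∑ j, dist (y j) (c j) ^ 2) ≤ Real.sqrt ((n : ℝ) * (r / 2) ^ 2) :=
        Real.sqrt_le_sqrt h1
    _ = Real.sqrt n * (r / 2) := by
        rw [Real.sqrt_mul (Nat.cast_nonneg n), Real.sqrt_sq (by linarith)]

lemma cube_isCompact (c : Rn n) {r : ℝ} (hr : 0 ≤ r) : IsCompact (cube c r) :=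
  (isCompact_closedBall c (Real.sqrt n * (r / 2))).of_isClosed_subset
    (cube_isClosed c r) (cube_subset_closedBall c hr)

end Stmt0Aux

open Set

/-- weak-type oscillation control implies strong `q₁` oscillation control,
with the explicit constant `2 (q₁/(q₂-q₁))^(1/q₂) M`, for `ω ∈ A_∞`. -/
theorem stmt0 {n : ℕ} (q₁ q₂ M : ℝ) (hq₁ : 1 < q₁) (hq₁₂ : q₁ < q₂) (hM : 0 < M)
    (ω f : Rn n → ℝ) (hω : IsAinf ω) (hf : LocallyIntegrable f volume)
    (hweak : ∀ (c : Rn n) (r : ℝ), 0 < r → ∀ l : ℝ, 0 < l →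
      wMeas ω {x ∈ cube c r | l * ω x < |f x - avg f c r|} ≤
        M ^ q₂ * wMeas ω (cube c r) * l ^ (-q₂)) :
    ∀ (c : Rn n) (r : ℝ), 0 < r →
      ((wMeas ω (cube c r))⁻¹ *
          ∫ x in cube c r, |f x - avg f c r| ^ q₁ * ω x ^ (1 - q₁)) ^ (1 / q₁) ≤
        2 * (q₁ / (q₂ - q₁)) ^ (1 / q₂) * M := by
  intro c r hr
  obtain ⟨p, A, hp, hωpos, hωloc, -⟩ := hω
  have hq₁pos : (0 : ℝ) < q₁ := by linarith
  have hq₂pos : (0 : ℝ) < q₂ := by linarith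
  have hqq : (0 : ℝ) < q₂ - q₁ := by linarith
  set Q : Set (Rn n) := cube c r with hQdef
  set a : ℝ := avg f c r with hadef
  have hQm : MeasurableSet Q := (Stmt0Aux.cube_isClosed c r).measurableSet
  have hωQ : IntegrableOn ω Q volume :=
    hωloc.integrableOn_isCompact (Stmt0Aux.cube_isCompact c hr.le)
  set W : ℝ := wMeas ω Q with hWdef
  have hWpos : 0 < W := by
    have hsupp : Function.support ω ∩ Q = Q := by
      ext x
      simp [Function.support, (hωpos x).ne']
    rw [hWdef, wMeas, setIntegral_pos_iff_support_of_nonneg_ae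
      (Filter.Eventually.of_forall fun x => (hωpos x).le) hωQ, hsupp]
    exact lt_of_lt_of_le (Metric.measure_ball_pos volume c (by positivity : (0:ℝ) < r / 2))
      (measure_mono (Stmt0Aux.ball_subset_cube c r))
  -- measurable representatives
  have hfm := hf.aestronglyMeasurable.aemeasurable
  have hωm := hωloc.aestronglyMeasurable.aemeasurable
  set f' := hfm.mk f with hf'def
  have hf'm : Measurable f' := hfm.measurable_mk
  have hf'e : f =ᵐ[volume] f' := hfm.ae_eq_mk
  set ω₀ := hωm.mk ω with hω₀def
  have hω₀m : Measurable ω₀ := hωm.measurable_mk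
  set ω' : Rn n → ℝ := fun x => if 0 < ω₀ x then ω₀ x else 1 with hω'def
  have hω'm : Measurable ω' :=
    Measurable.ite (measurableSet_lt measurable_const hω₀m) hω₀m measurable_const
  have hω'pos : ∀ x, 0 < ω' x := by
    intro x
    by_cases hx : 0 < ω₀ x <;> simp [hω'def, hx]
  have hω'e : ω =ᵐ[volume] ω' := by
    filter_upwards [hωm.ae_eq_mk] with x hx
    have hx' : ω x = ω₀ x := hx
    have hx0 : 0 < ω₀ x := by rw [← hx']; exact hωpos x
    calc ω x = ω₀ x := hx'
      _ = ω' x := by simp [hω'def, hx0]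
  set ν : Measure (Rn n) := volume.restrict Q with hν
  set μ : Measure (Rn n) := ν.withDensity (fun x => ENNReal.ofReal (ω' x)) with hμ
  set h : Rn n → ℝ := fun x => |f' x - a| / ω' x with hh
  have hhm : Measurable h := (hf'm.sub measurable_const).abs.div hω'm
  have hhnn : ∀ x, 0 ≤ h x := fun x => div_nonneg (abs_nonneg _) (hω'pos x).le
  have hωeqres : ∀ᵐ x ∂ν, ENNReal.ofReal (ω' x) = ENNReal.ofReal (ω x) :=
    ae_restrict_of_ae (hω'e.mono fun x hx => by simp only [hx])
  -- total measure
  have hμQ : μ Set.univ = ENNReal.ofReal W := by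
    rw [hμ, withDensity_apply _ MeasurableSet.univ, Measure.restrict_univ]
    calc ∫⁻ x, ENNReal.ofReal (ω' x) ∂ν = ∫⁻ x, ENNReal.ofReal (ω x) ∂ν :=
          lintegral_congr_ae hωeqres
      _ = ENNReal.ofReal (∫ x, ω x ∂ν) :=
          (ofReal_integral_eq_lintegral_ofReal hωQ
            (Filter.Eventually.of_forall fun x => (hωpos x).le)).symm
  have hμle : ∀ t : ℝ, μ {x | t < h x} ≤ ENNReal.ofReal W := fun t =>
    le_trans (measure_mono (Set.subset_univ _)) (le_of_eq hμQ)
  -- level set bound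
  have hμlev : ∀ t : ℝ, 0 < t →
      μ {x | t < h x} ≤ ENNReal.ofReal (M ^ q₂ * W * t ^ (-q₂)) := by
    intro t ht
    have hsm : MeasurableSet {x | t < h x} := measurableSet_lt measurable_const hhm
    have hset : {x | t < h x} ∩ Q = {x ∈ Q | t * ω' x < |f' x - a|} := by
      ext x
      simp only [Set.mem_inter_iff, Set.mem_setOf_eq, hh]
      rw [lt_div_iff₀ (hω'pos x)]
      tauto
    have hae : ({x ∈ Q | t * ω' x < |f' x - a|} : Set (Rn n)) =ᵐ[volume]
        ({x ∈ Q | t * ω x < |f x - a|} : Set (Rn n)) := by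
      rw [Filter.eventuallyEq_set]
      filter_upwards [hf'e, hω'e] with x h1 h2
      simp only [Set.mem_setOf_eq, h1, h2]
    have hsub : ({x ∈ Q | t * ω x < |f x - a|} : Set (Rn n)) ⊆ Q := fun x hx => hx.1
    calc μ {x | t < h x} = ∫⁻ x in {x | t < h x}, ENNReal.ofReal (ω' x) ∂ν :=
          withDensity_apply _ hsm
      _ = ∫⁻ x in {x | t < h x} ∩ Q, ENNReal.ofReal (ω' x) := by
          rw [hν, Measure.restrict_restrict hsm]
      _ = ∫⁻ x in {x ∈ Q | t * ω x < |f x - a|}, ENNReal.ofReal (ω' x) := by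
          rw [hset, Measure.restrict_congr_set hae]
      _ = ∫⁻ x in {x ∈ Q | t * ω x < |f x - a|}, ENNReal.ofReal (ω x) :=
          lintegral_congr_ae (ae_restrict_of_ae (hω'e.mono fun x hx => by simp only [hx]))
      _ = ENNReal.ofReal (wMeas ω {x ∈ Q | t * ω x < |f x - a|}) :=
          (ofReal_integral_eq_lintegral_ofReal (hωQ.mono_set hsub)
            (Filter.Eventually.of_forall fun x => (hωpos x).le)).symm
      _ ≤ ENNReal.ofReal (M ^ q₂ * W * t ^ (-q₂)) :=
          ENNReal.ofReal_le_ofReal (hweak c r hr t ht)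
  -- the integrand
  set g : Rn n → ℝ := fun x => |f' x - a| ^ q₁ * ω' x ^ (1 - q₁) with hgdef
  have hgm : Measurable g :=
    ((hf'm.sub measurable_const).abs.pow measurable_const).mul (hω'm.pow measurable_const)
  have hgnn : ∀ x, 0 ≤ g x := fun x =>
    mul_nonneg (Real.rpow_nonneg (abs_nonneg _) _) (Real.rpow_nonneg (hω'pos x).le _)
  have hIcongr : ∫ x in Q, |f x - a| ^ q₁ * ω x ^ (1 - q₁) = ∫ x in Q, g x := by
    refine integral_congr_ae (ae_restrict_of_ae ?_)
    filter_upwards [hf'e, hω'e] with x h1 h2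
    rw [hgdef, h1, h2]
  have hgh : ∀ x, g x = h x ^ q₁ * ω' x := by
    intro x
    have hw := hω'pos x
    simp only [hgdef, hh]
    rw [Real.div_rpow (abs_nonneg _) hw.le, Real.rpow_sub hw, Real.rpow_one]
    ring
  have hI : ∫ x in Q, g x = (∫⁻ x, ENNReal.ofReal (h x ^ q₁) ∂μ).toReal := by
    rw [integral_eq_lintegral_of_nonneg_ae (Filter.Eventually.of_forall hgnn)
      hgm.aestronglyMeasurable]
    congr 1
    rw [hμ, lintegral_withDensity_eq_lintegral_mul ν hω'm.ennreal_ofReal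
      ((hhm.pow measurable_const).ennreal_ofReal)]
    refine lintegral_congr fun x => ?_
    simp only [Pi.mul_apply]
    rw [← ENNReal.ofReal_mul (hω'pos x).le, hgh x, mul_comm]
  -- layer cake
  have hLC := lintegral_rpow_eq_lintegral_meas_lt_mul μ
    (Filter.Eventually.of_forall hhnn) hhm.aemeasurable hq₁pos
  -- the splitting point
  set lam : ℝ := (q₁ / (q₂ - q₁)) ^ (1 / q₂) * M with hlam
  have hlam_pos : 0 < lam := mul_pos (Real.rpow_pos_of_pos (div_pos hq₁pos hqq) _) hM
  have hlamq₂ : lam ^ q₂ = q₁ / (q₂ - q₁) * M ^ q₂ := by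
    rw [hlam, Real.mul_rpow (Real.rpow_nonneg (div_pos hq₁pos hqq).le _) hM.le,
      ← Real.rpow_mul (div_pos hq₁pos hqq).le, one_div, inv_mul_cancel₀ hq₂pos.ne',
      Real.rpow_one]
  -- split the tail integral
  have hsplit : ∫⁻ t in Ioi (0:ℝ), μ {x | t < h x} * ENNReal.ofReal (t ^ (q₁ - 1))
      = (∫⁻ t in Ioc (0:ℝ) lam, μ {x | t < h x} * ENNReal.ofReal (t ^ (q₁ - 1)))
        + ∫⁻ t in Ioi lam, μ {x | t < h x} * ENNReal.ofReal (t ^ (q₁ - 1)) := by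
    rw [← Ioc_union_Ioi_eq_Ioi hlam_pos.le,
      lintegral_union measurableSet_Ioi (Ioc_disjoint_Ioi le_rfl)]
  have hT1 : ∫⁻ t in Ioc (0:ℝ) lam, μ {x | t < h x} * ENNReal.ofReal (t ^ (q₁ - 1))
      ≤ ENNReal.ofReal (W * (lam ^ q₁ / q₁)) := by
    have hint : IntegrableOn (fun t : ℝ => t ^ (q₁ - 1)) (Ioc 0 lam) :=
      (intervalIntegral.intervalIntegrable_rpow' (by linarith : (-1:ℝ) < q₁ - 1)).1
    have hnn : ∀ᵐ t ∂(volume.restrict (Ioc (0:ℝ) lam)), 0 ≤ t ^ (q₁ - 1) := by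
      filter_upwards [ae_restrict_mem measurableSet_Ioc] with t ht
      exact Real.rpow_nonneg ht.1.le _
    have hval : ∫ t in Ioc (0:ℝ) lam, t ^ (q₁ - 1) = lam ^ q₁ / q₁ := by
      rw [← intervalIntegral.integral_of_le hlam_pos.le,
        integral_rpow (Or.inl (by linarith : (-1:ℝ) < q₁ - 1))]
      have he : q₁ - 1 + 1 = q₁ := by ring
      rw [he, Real.zero_rpow hq₁pos.ne', sub_zero]
    calc ∫⁻ t in Ioc (0:ℝ) lam, μ {x | t < h x} * ENNReal.ofReal (t ^ (q₁ - 1))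
        ≤ ∫⁻ t in Ioc (0:ℝ) lam, ENNReal.ofReal W * ENNReal.ofReal (t ^ (q₁ - 1)) :=
          lintegral_mono fun t => mul_le_mul_left (hμle t) _
      _ = ENNReal.ofReal W * ∫⁻ t in Ioc (0:ℝ) lam, ENNReal.ofReal (t ^ (q₁ - 1)) :=
          lintegral_const_mul' _ _ ENNReal.ofReal_ne_top
      _ = ENNReal.ofReal W * ENNReal.ofReal (∫ t in Ioc (0:ℝ) lam, t ^ (q₁ - 1)) := by
          rw [ofReal_integral_eq_lintegral_ofReal hint hnn]
      _ = ENNReal.ofReal (W * (lam ^ q₁ / q₁)) := by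
          rw [hval, ← ENNReal.ofReal_mul hWpos.le]
  have hT2 : ∫⁻ t in Ioi lam, μ {x | t < h x} * ENNReal.ofReal (t ^ (q₁ - 1))
      ≤ ENNReal.ofReal ((M ^ q₂ * W) * (lam ^ (q₁ - q₂) / (q₂ - q₁))) := by
    have hint2 : IntegrableOn (fun t : ℝ => t ^ (q₁ - 1 - q₂)) (Ioi lam) :=
      integrableOn_Ioi_rpow_of_lt (by linarith) hlam_pos
    have hnn2 : ∀ᵐ t ∂(volume.restrict (Ioi lam)), 0 ≤ t ^ (q₁ - 1 - q₂) := by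
      filter_upwards [ae_restrict_mem measurableSet_Ioi] with t ht
      exact Real.rpow_nonneg (le_trans hlam_pos.le (le_of_lt ht)) _
    have hval2 : ∫ t in Ioi lam, t ^ (q₁ - 1 - q₂) = lam ^ (q₁ - q₂) / (q₂ - q₁) := by
      rw [integral_Ioi_rpow_of_lt (by linarith) hlam_pos]
      have he : q₁ - 1 - q₂ + 1 = q₁ - q₂ := by ring
      rw [he, show q₂ - q₁ = -(q₁ - q₂) from by ring, div_neg, neg_div]
    have hmono : ∀ᵐ t ∂(volume.restrict (Ioi lam)),
        μ {x | t < h x} * ENNReal.ofReal (t ^ (q₁ - 1))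
          ≤ ENNReal.ofReal (M ^ q₂ * W) * ENNReal.ofReal (t ^ (q₁ - 1 - q₂)) := by
      filter_upwards [ae_restrict_mem measurableSet_Ioi] with t ht
      have htpos : 0 < t := lt_trans hlam_pos ht
      calc μ {x | t < h x} * ENNReal.ofReal (t ^ (q₁ - 1))
          ≤ ENNReal.ofReal (M ^ q₂ * W * t ^ (-q₂)) * ENNReal.ofReal (t ^ (q₁ - 1)) :=
            mul_le_mul_left (hμlev t htpos) _
        _ = ENNReal.ofReal (M ^ q₂ * W) * ENNReal.ofReal (t ^ (q₁ - 1 - q₂)) := by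
            rw [← ENNReal.ofReal_mul (by positivity :
              (0:ℝ) ≤ M ^ q₂ * W * t ^ (-q₂))]
            rw [← ENNReal.ofReal_mul (by positivity : (0:ℝ) ≤ M ^ q₂ * W)]
            have he : M ^ q₂ * W * t ^ (-q₂) * t ^ (q₁ - 1)
                = M ^ q₂ * W * t ^ (q₁ - 1 - q₂) := by
              rw [mul_assoc, ← Real.rpow_add htpos]
              have : -q₂ + (q₁ - 1) = q₁ - 1 - q₂ := by ring
              rw [this]
            rw [he]
    calc ∫⁻ t in Ioi lam, μ {x | t < h x} * ENNReal.ofReal (t ^ (q₁ - 1))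
        ≤ ∫⁻ t in Ioi lam, ENNReal.ofReal (M ^ q₂ * W) * ENNReal.ofReal (t ^ (q₁ - 1 - q₂)) :=
          lintegral_mono_ae hmono
      _ = ENNReal.ofReal (M ^ q₂ * W) * ∫⁻ t in Ioi lam, ENNReal.ofReal (t ^ (q₁ - 1 - q₂)) :=
          lintegral_const_mul' _ _ ENNReal.ofReal_ne_top
      _ = ENNReal.ofReal (M ^ q₂ * W) * ENNReal.ofReal (∫ t in Ioi lam, t ^ (q₁ - 1 - q₂)) := by
          rw [ofReal_integral_eq_lintegral_ofReal hint2 hnn2]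
      _ = ENNReal.ofReal ((M ^ q₂ * W) * (lam ^ (q₁ - q₂) / (q₂ - q₁))) := by
          rw [hval2, ← ENNReal.ofReal_mul (by positivity : (0:ℝ) ≤ M ^ q₂ * W)]
  -- combine
  have hWnn : 0 ≤ W := hWpos.le
  have hMq : M ^ q₂ * lam ^ (q₁ - q₂) = (q₂ - q₁) / q₁ * lam ^ q₁ := by
    have h2 : lam ^ q₂ * lam ^ (q₁ - q₂) = lam ^ q₁ := by
      rw [← Real.rpow_add hlam_pos]; norm_num
    have h3 : M ^ q₂ = (q₂ - q₁) / q₁ * lam ^ q₂ := by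
      rw [hlamq₂]; field_simp
    rw [h3, mul_assoc, h2]
  have harith : q₁ * (W * (lam ^ q₁ / q₁) + (M ^ q₂ * W) * (lam ^ (q₁ - q₂) / (q₂ - q₁)))
      = W * (2 * lam ^ q₁) := by
    have e : (M ^ q₂ * W) * (lam ^ (q₁ - q₂) / (q₂ - q₁)) = W * lam ^ q₁ / q₁ := by
      calc (M ^ q₂ * W) * (lam ^ (q₁ - q₂) / (q₂ - q₁))
          = W * (M ^ q₂ * lam ^ (q₁ - q₂)) / (q₂ - q₁) := by ring
        _ = W * ((q₂ - q₁) / q₁ * lam ^ q₁) / (q₂ - q₁) := by rw [hMq]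
        _ = W * lam ^ q₁ / q₁ := by field_simp
    rw [e]; field_simp; ring
  have hLbound : (∫⁻ x, ENNReal.ofReal (h x ^ q₁) ∂μ)
      ≤ ENNReal.ofReal (W * (2 * lam ^ q₁)) := by
    rw [hLC, hsplit]
    calc ENNReal.ofReal q₁ *
        ((∫⁻ t in Ioc (0:ℝ) lam, μ {x | t < h x} * ENNReal.ofReal (t ^ (q₁ - 1)))
          + ∫⁻ t in Ioi lam, μ {x | t < h x} * ENNReal.ofReal (t ^ (q₁ - 1)))
        ≤ ENNReal.ofReal q₁ * (ENNReal.ofReal (W * (lam ^ q₁ / q₁))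
            + ENNReal.ofReal ((M ^ q₂ * W) * (lam ^ (q₁ - q₂) / (q₂ - q₁)))) :=
          mul_le_mul_right (add_le_add hT1 hT2) _
      _ = ENNReal.ofReal (q₁ * (W * (lam ^ q₁ / q₁)
            + (M ^ q₂ * W) * (lam ^ (q₁ - q₂) / (q₂ - q₁)))) := by
          rw [← ENNReal.ofReal_add
            (mul_nonneg hWnn (by positivity))
            (mul_nonneg (mul_nonneg (by positivity) hWnn) (by positivity)),
            ← ENNReal.ofReal_mul hq₁pos.le]
      _ = ENNReal.ofReal (W * (2 * lam ^ q₁)) := by rw [harith]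
  have hIle : ∫ x in Q, |f x - a| ^ q₁ * ω x ^ (1 - q₁) ≤ W * (2 * lam ^ q₁) := by
    rw [hIcongr, hI]
    exact ENNReal.toReal_le_of_le_ofReal (mul_nonneg hWnn (by positivity)) hLbound
  have hInn : 0 ≤ ∫ x in Q, |f x - a| ^ q₁ * ω x ^ (1 - q₁) := by
    rw [hIcongr, hI]; exact ENNReal.toReal_nonneg
  have hfin : W⁻¹ * ∫ x in Q, |f x - a| ^ q₁ * ω x ^ (1 - q₁) ≤ 2 * lam ^ q₁ := by
    calc W⁻¹ * ∫ x in Q, |f x - a| ^ q₁ * ω x ^ (1 - q₁)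
        ≤ W⁻¹ * (W * (2 * lam ^ q₁)) :=
          mul_le_mul_of_nonneg_left hIle (inv_nonneg.mpr hWnn)
      _ = 2 * lam ^ q₁ := by field_simp
  calc (W⁻¹ * ∫ x in Q, |f x - a| ^ q₁ * ω x ^ (1 - q₁)) ^ (1 / q₁)
      ≤ (2 * lam ^ q₁) ^ (1 / q₁) :=
        Real.rpow_le_rpow (mul_nonneg (inv_nonneg.mpr hWnn) hInn) hfin (by positivity)
    _ = 2 ^ (1 / q₁) * lam := by
        rw [Real.mul_rpow (by norm_num) (Real.rpow_nonneg hlam_pos.le _),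
          ← Real.rpow_mul hlam_pos.le, mul_one_div_cancel hq₁pos.ne', Real.rpow_one]
    _ ≤ 2 * lam := by
        have h2 : (2:ℝ) ^ (1 / q₁) ≤ 2 ^ (1:ℝ) :=
          Real.rpow_le_rpow_of_exponent_le one_le_two
            (by rw [div_le_one hq₁pos]; linarith)
        rw [Real.rpow_one] at h2
        exact mul_le_mul_of_nonneg_right h2 hlam_pos.le
    _ = 2 * (q₁ / (q₂ - q₁)) ^ (1 / q₂) * M := by rw [hlam]; ring
end
end

section
/- Let $0 < r < 1$, $\omega \in A_1$, and let $f$ be locally integrable with $\|f\|_{BMO_r(\omega)} = 1$ (with $c_Q$ the minimizers as before). Suppose $Q_j \subset Q_0$ is a cube arising from a Calderón–Zygmund stopping-time decomposition at level $s > 1$, i.e. $s^r < \frac{1}{\omega(Q_j)}\int_{Q_j}\left(\frac{|f-c_{Q_0}|}{\omega}\right)^r \omega\,dx \leq 2^n s^r$. Then for almost every $x \in Q_j$, $\frac{|c_{Q_j} - c_{Q_0}|}{\omega(x)} \leq 2^{(n+1)/r}\,s\,[\omega]_{A_1}^{1/r}$. -/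
open MeasureTheory Real
noncomputable section

lemma cube_eq {n : ℕ} (c : Rn n) (ρ : ℝ) :
    cube c ρ = (MeasurableEquiv.toLp 2 (Fin n → ℝ)).symm ⁻¹'
      (Set.pi Set.univ fun i => Set.Icc (c i - ρ/2) (c i + ρ/2)) := by
  ext y
  show (∀ i, |y i - c i| ≤ ρ / 2) ↔ _
  rw [Set.mem_preimage, Set.mem_univ_pi]
  apply forall_congr'
  intro i
  have he : (MeasurableEquiv.toLp 2 (Fin n → ℝ)).symm y i = y i := rfl
  rw [Set.mem_Icc, abs_sub_le_iff, he]
  constructor <;> (intro h; constructor <;> linarith [h.1, h.2])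

lemma cube_volume {n : ℕ} (c : Rn n) (ρ : ℝ) (hρ : 0 ≤ ρ) :
    volume (cube c ρ) = ENNReal.ofReal (ρ ^ n) := by
  rw [cube_eq, (EuclideanSpace.volume_preserving_symm_measurableEquiv_toLp (Fin n)).measure_preimage
    ((MeasurableSet.univ_pi fun i => measurableSet_Icc).nullMeasurableSet)]
  rw [volume_pi_pi]
  have : ∀ i : Fin n, volume (Set.Icc (c i - ρ/2) (c i + ρ/2)) = ENNReal.ofReal ρ := by
    intro i; rw [Real.volume_Icc]; congr 1; ring
  simp [this, ← ENNReal.ofReal_pow hρ]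

lemma cube_compact {n : ℕ} (c : Rn n) (ρ : ℝ) : IsCompact (cube c ρ) := by
  rw [cube_eq]
  exact (PiLp.continuousLinearEquiv 2 ℝ (fun _ : Fin n => ℝ)).toHomeomorph.isCompact_preimage.mpr
    (isCompact_univ_pi fun i => isCompact_Icc)

lemma cube_measurable {n : ℕ} (c : Rn n) (ρ : ℝ) : MeasurableSet (cube c ρ) :=
  (cube_compact c ρ).isClosed.measurableSet

lemma young_bound {a w r : ℝ} (ha : 0 ≤ a) (hw : 0 < w) (hr0 : 0 < r) (hr1 : r ≤ 1) :
    (a / w) ^ r * w ≤ a + w := by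
  rcases le_total a w with h | h
  · have h1 : (a / w) ^ r ≤ 1 :=
      Real.rpow_le_one (div_nonneg ha hw.le) ((div_le_one hw).mpr h) hr0.le
    nlinarith
  · have h1 : 1 ≤ a / w := (one_le_div hw).mpr h
    have h2 : (a / w) ^ r ≤ (a / w) ^ (1 : ℝ) := Real.rpow_le_rpow_of_exponent_le h1 hr1
    rw [Real.rpow_one] at h2
    have h3 : (a / w) ^ r * w ≤ (a / w) * w := by nlinarith
    rw [div_mul_cancel₀ a hw.ne'] at h3
    linarith

lemma rpow_add_le {a b r : ℝ} (ha : 0 ≤ a) (hb : 0 ≤ b) (hr0 : 0 ≤ r) (hr1 : r ≤ 1) :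
    (a + b) ^ r ≤ a ^ r + b ^ r := by
  have h := NNReal.rpow_add_le_add_rpow a.toNNReal b.toNNReal hr0 hr1
  have h2 := NNReal.coe_le_coe.mpr h
  simpa [NNReal.coe_rpow, Real.coe_toNNReal a ha, Real.coe_toNNReal b hb] using h2

/-- in the Calderón–Zygmund stopping-time argument, the selected cubes `Q_j ⊆ Q_0`
(at level `s > 1`) satisfy `|c_{Q_j} - c_{Q_0}| / ω(x) ≤ 2^{(n+1)/r} s [ω]_{A₁}^{1/r}`
for a.e. `x ∈ Q_j`, where `‖f‖_{BMO_r(ω)} = 1` and the `c_Q` are the minimizers. -/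
theorem stmt9 (n : ℕ) (r A s : ℝ) (hr0 : 0 < r) (hr1 : r < 1) (hs : 1 < s)
    (ω f : Rn n → ℝ) (hω : IsA1 ω A) (hf : LocallyIntegrable f volume)
    (cQ : Rn n → ℝ → ℝ)
    -- `cQ c ρ` minimizes the `r`-oscillation over `cube c ρ`
    (hmin : ∀ (c : Rn n) (ρ : ℝ), 0 < ρ → ∀ k : ℝ,
        (∫ x in cube c ρ, (|f x - cQ c ρ| / ω x) ^ r * ω x) ≤
          ∫ x in cube c ρ, (|f x - k| / ω x) ^ r * ω x)
    -- `‖f‖_{BMO_r(ω)} = 1` (so in particular `≤ 1` on every cube)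
    (hnorm : ∀ (c : Rn n) (ρ : ℝ), 0 < ρ →
        (∫ x in cube c ρ, (|f x - cQ c ρ| / ω x) ^ r * ω x) ≤ wMeas ω (cube c ρ))
    (c₀ cJ : Rn n) (ρ₀ ρJ : ℝ) (hρ₀ : 0 < ρ₀) (hρJ : 0 < ρJ)
    (hsub : cube cJ ρJ ⊆ cube c₀ ρ₀)
    -- the stopping-time selection condition at level `s`
    (hlow : s ^ r <
        (wMeas ω (cube cJ ρJ))⁻¹ * ∫ x in cube cJ ρJ, (|f x - cQ c₀ ρ₀| / ω x) ^ r * ω x)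
    (hhigh : (wMeas ω (cube cJ ρJ))⁻¹ *
        (∫ x in cube cJ ρJ, (|f x - cQ c₀ ρ₀| / ω x) ^ r * ω x) ≤ 2 ^ (n : ℝ) * s ^ r) :
    ∀ᵐ x ∂(volume : Measure (Rn n)), x ∈ cube cJ ρJ →
      |cQ cJ ρJ - cQ c₀ ρ₀| / ω x ≤ 2 ^ (((n : ℝ) + 1) / r) * s * A ^ (1 / r) := by
  obtain ⟨hωpos, hωloc, hA1, hA⟩ := hω
  set Q : Set (Rn n) := cube cJ ρJ with hQdef
  set W : ℝ := wMeas ω Q with hWdef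
  set d : ℝ := cQ cJ ρJ - cQ c₀ ρ₀ with hddef
  have hQm : MeasurableSet Q := cube_measurable cJ ρJ
  have hQc : IsCompact Q := cube_compact cJ ρJ
  have hρn : (0:ℝ) < ρJ ^ n := pow_pos hρJ n
  have hvol : volume Q = ENNReal.ofReal (ρJ ^ n) := cube_volume cJ ρJ hρJ.le
  have hvolfin : volume Q < ⊤ := by rw [hvol]; exact ENNReal.ofReal_lt_top
  have hωQ : IntegrableOn ω Q := hωloc.integrableOn_isCompact hQc
  have hfQ : IntegrableOn f Q := hf.integrableOn_isCompact hQc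
  have hWpos : 0 < W := by
    rw [hWdef, wMeas, setIntegral_pos_iff_support_of_nonneg_ae
      (Filter.Eventually.of_forall fun x => (hωpos x).le) hωQ]
    have hsupp : Function.support ω ∩ Q = Q := by
      ext x; simp [Function.support, (hωpos x).ne']
    rw [hsupp, hvol]
    exact ENNReal.ofReal_pos.mpr hρn
  -- integrability of the oscillation integrands
  have hosc : ∀ (b : Rn n → ℝ), AEMeasurable b (volume.restrict Q) →
      IntegrableOn b Q → (∀ x, 0 ≤ b x) →
      IntegrableOn (fun x => (b x / ω x) ^ r * ω x) Q := by
    intro b hbm hbi hb0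
    have hωm : AEMeasurable ω (volume.restrict Q) := hωQ.aemeasurable
    have hm : AEMeasurable (fun x => (b x / ω x) ^ r * ω x) (volume.restrict Q) :=
      (((Real.continuous_rpow_const hr0.le).measurable.comp_aemeasurable
        (hbm.div hωm)).mul hωm)
    apply Integrable.mono' (hbi.add hωQ) hm.aestronglyMeasurable
    filter_upwards with x
    rw [Real.norm_eq_abs, abs_of_nonneg (mul_nonneg
      (Real.rpow_nonneg (div_nonneg (hb0 x) (hωpos x).le) r) (hωpos x).le)]
    exact young_bound (hb0 x) (hωpos x) hr0 hr1.le
  have habs : ∀ k : ℝ, AEMeasurable (fun x => |f x - k|) (volume.restrict Q) :=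
    fun k => continuous_abs.measurable.comp_aemeasurable (hfQ.aemeasurable.sub aemeasurable_const)
  have habsi : ∀ k : ℝ, IntegrableOn (fun x => |f x - k|) Q :=
    fun k => (hfQ.sub (integrableOn_const hvolfin.ne)).abs
  have hosc0 : IntegrableOn (fun x => (|f x - cQ c₀ ρ₀| / ω x) ^ r * ω x) Q :=
    hosc _ (habs _) (habsi _) (fun x => abs_nonneg _)
  have hoscJ : IntegrableOn (fun x => (|f x - cQ cJ ρJ| / ω x) ^ r * ω x) Q :=
    hosc _ (habs _) (habsi _) (fun x => abs_nonneg _)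
  have hoscd : IntegrableOn (fun x => (|d| / ω x) ^ r * ω x) Q :=
    hosc _ aemeasurable_const (integrableOn_const hvolfin.ne)
      (fun x => abs_nonneg _)
  -- integral bounds
  set I0 : ℝ := ∫ x in Q, (|f x - cQ c₀ ρ₀| / ω x) ^ r * ω x with hI0def
  set IJ : ℝ := ∫ x in Q, (|f x - cQ cJ ρJ| / ω x) ^ r * ω x with hIJdef
  have hI0 : I0 ≤ 2 ^ (n:ℝ) * s ^ r * W := by
    have h := mul_le_mul_of_nonneg_left hhigh hWpos.le
    rw [← mul_assoc, mul_inv_cancel₀ hWpos.ne', one_mul] at h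
    linarith [h]
  have hIJ : IJ ≤ W := hnorm cJ ρJ hρJ
  have hsr : (1:ℝ) ≤ s ^ r := Real.one_le_rpow hs.le hr0.le
  have h2n : (1:ℝ) ≤ 2 ^ (n:ℝ) := Real.one_le_rpow one_le_two (Nat.cast_nonneg n)
  have h2n1 : ((2:ℝ) ^ ((n:ℝ) + 1)) = 2 ^ (n:ℝ) * 2 := by
    rw [Real.rpow_add two_pos, Real.rpow_one]
  have hK : (∫ x in Q, (|d| / ω x) ^ r * ω x) ≤ 2 ^ ((n:ℝ) + 1) * s ^ r * W := by
    have hmono : (∫ x in Q, (|d| / ω x) ^ r * ω x) ≤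
        ∫ x in Q, ((|f x - cQ cJ ρJ| / ω x) ^ r * ω x + (|f x - cQ c₀ ρ₀| / ω x) ^ r * ω x) := by
      apply setIntegral_mono_on hoscd (hoscJ.add hosc0) hQm
      intro x _
      have hw := hωpos x
      have hd : |d| ≤ |f x - cQ c₀ ρ₀| + |f x - cQ cJ ρJ| := by
        rw [hddef]
        calc |cQ cJ ρJ - cQ c₀ ρ₀| ≤ |cQ cJ ρJ - f x| + |f x - cQ c₀ ρ₀| := abs_sub_le _ _ _
          _ = |f x - cQ c₀ ρ₀| + |f x - cQ cJ ρJ| := by rw [abs_sub_comm]; ring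
      have h1 : |d| / ω x ≤ |f x - cQ c₀ ρ₀| / ω x + |f x - cQ cJ ρJ| / ω x := by
        rw [← add_div]; exact (div_le_div_iff_of_pos_right hw).mpr hd
      have h2 : (|d| / ω x) ^ r ≤
          (|f x - cQ c₀ ρ₀| / ω x) ^ r + (|f x - cQ cJ ρJ| / ω x) ^ r := by
        refine le_trans (Real.rpow_le_rpow (div_nonneg (abs_nonneg _) hw.le) h1 hr0.le) ?_
        exact rpow_add_le (div_nonneg (abs_nonneg _) hw.le)
          (div_nonneg (abs_nonneg _) hw.le) hr0.le hr1.le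
      have h3 := mul_le_mul_of_nonneg_right h2 hw.le
      simp only [Pi.add_apply]
      linarith [h3]
    have hadd : (∫ x in Q, ((|f x - cQ cJ ρJ| / ω x) ^ r * ω x
        + (|f x - cQ c₀ ρ₀| / ω x) ^ r * ω x)) = IJ + I0 :=
      integral_add hoscJ hosc0
    rw [hadd] at hmono
    have h4 : IJ + I0 ≤ 2 ^ ((n:ℝ) + 1) * s ^ r * W := by
      rw [h2n1]
      nlinarith [hWpos, hsr, h2n, hIJ, hI0]
    linarith
  -- pointwise lower bound via A1
  obtain ⟨m, hmdef⟩ : ∃ m : ℝ, m = W / (A * ρJ ^ n) := ⟨_, rfl⟩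
  have hApos : (0:ℝ) < A := lt_of_lt_of_le one_pos hA1
  have hmpos : 0 < m := hmdef ▸ div_pos hWpos (by positivity)
  have hae := hA cJ ρJ hρJ
  have haem : ∀ᵐ x ∂(volume : Measure (Rn n)), x ∈ Q → m ≤ ω x := by
    filter_upwards [hae] with x hx hxQ
    have h := hx hxQ
    rw [hmdef, div_le_iff₀ (by positivity)]
    rw [div_le_iff₀ hρn] at h
    nlinarith [h]
  have hconst : |d| ^ r * m ^ (1 - r) * ρJ ^ n ≤ ∫ x in Q, (|d| / ω x) ^ r * ω x := by
    have hle : (fun _ : Rn n => |d| ^ r * m ^ (1 - r)) ≤ᶠ[ae (volume.restrict Q)]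
        fun x => (|d| / ω x) ^ r * ω x := by
      rw [Filter.EventuallyLE, ae_restrict_iff' hQm]
      filter_upwards [haem] with x hx hxQ
      have hw := hωpos x
      have heq : (|d| / ω x) ^ r * ω x = |d| ^ r * ω x ^ (1 - r) := by
        rw [Real.div_rpow (abs_nonneg _) hw.le, div_mul_eq_mul_div, mul_div_assoc]
        congr 1
        rw [Real.rpow_sub hw, Real.rpow_one]
      rw [heq]
      exact mul_le_mul_of_nonneg_left
        (Real.rpow_le_rpow hmpos.le (hx hxQ) (by linarith)) (Real.rpow_nonneg (abs_nonneg _) r)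
    have := setIntegral_mono_ae_restrict
      (integrableOn_const hvolfin.ne) hoscd hle
    rw [setIntegral_const, measureReal_def, hvol, ENNReal.toReal_ofReal hρn.le, smul_eq_mul] at this
    linarith [this]
  have hWm : W = m * (A * ρJ ^ n) := by
    rw [hmdef]; field_simp
  have key : |d| ^ r ≤ 2 ^ ((n:ℝ) + 1) * s ^ r * A * m ^ r := by
    have hmr : m ^ (1 - r) * m ^ r = m := by
      rw [← Real.rpow_add hmpos]; norm_num
    have h2 : |d| ^ r * (m ^ (1 - r) * ρJ ^ n) ≤
        (2 ^ ((n:ℝ) + 1) * s ^ r * A * m ^ r) * (m ^ (1 - r) * ρJ ^ n) := by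
      calc |d| ^ r * (m ^ (1 - r) * ρJ ^ n) = |d| ^ r * m ^ (1 - r) * ρJ ^ n := by ring
        _ ≤ 2 ^ ((n:ℝ) + 1) * s ^ r * W := le_trans hconst hK
        _ = (2 ^ ((n:ℝ) + 1) * s ^ r * A * m ^ r) * (m ^ (1 - r) * ρJ ^ n) := by
            rw [hWm]
            linear_combination (-(2 ^ ((n:ℝ) + 1) * s ^ r * A * ρJ ^ n)) * hmr
    have hpos : (0:ℝ) < m ^ (1 - r) * ρJ ^ n := by
      exact mul_pos (Real.rpow_pos_of_pos hmpos _) hρn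
    exact le_of_mul_le_mul_right h2 hpos
  -- finish pointwise
  filter_upwards [haem] with x hx hxQ
  have hw := hωpos x
  have hmw : m ≤ ω x := hx hxQ
  have hbase : (0:ℝ) ≤ |d| / ω x := div_nonneg (abs_nonneg _) hw.le
  have h3 : (|d| / ω x) ^ r ≤ 2 ^ ((n:ℝ) + 1) * s ^ r * A := by
    rw [Real.div_rpow (abs_nonneg _) hw.le, div_le_iff₀ (Real.rpow_pos_of_pos hw r)]
    calc |d| ^ r ≤ 2 ^ ((n:ℝ) + 1) * s ^ r * A * m ^ r := key
      _ ≤ 2 ^ ((n:ℝ) + 1) * s ^ r * A * ω x ^ r := by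
          refine mul_le_mul_of_nonneg_left (Real.rpow_le_rpow hmpos.le hmw hr0.le) ?_
          positivity
  have h4 := Real.rpow_le_rpow (Real.rpow_nonneg hbase r) h3 (by positivity : (0:ℝ) ≤ r⁻¹)
  rw [Real.rpow_rpow_inv hbase hr0.ne'] at h4
  refine h4.trans (le_of_eq ?_)
  have hspos : (0:ℝ) ≤ s := by linarith
  rw [Real.mul_rpow (by positivity) hApos.le,
    Real.mul_rpow (by positivity) (Real.rpow_nonneg hspos r),
    ← Real.rpow_mul (by norm_num : (0:ℝ) ≤ 2),
    Real.rpow_rpow_inv hspos hr0.ne']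
  rw [show ((n:ℝ) + 1) * r⁻¹ = ((n:ℝ) + 1) / r from (div_eq_mul_inv _ _).symm,
    one_div]
end
end

section
/- Let $1 < p < \infty$ and $\omega \in A_1$, and suppose $b$ is locally integrable with $N := \sup_Q \sup_{\lambda>0} \frac{\lambda}{\omega(Q)^{1/p}}\,\omega(\{x \in Q: |b(x)-b_Q| > \lambda\,\omega(x)\})^{1/p} < \infty$. Then $b \in BMO(\omega)$ and $\|b\|_{BMO(\omega)} = \sup_Q \frac{1}{\omega(Q)}\int_Q |b - b_Q|\,dx \leq C\,N$ with $C$ depending only on $p$. -/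
open MeasureTheory Real
noncomputable section

lemma cube_isCompact {n : ℕ} (c : Rn n) (r : ℝ) : IsCompact (cube c r) := by
  have hclosed : IsClosed (cube c r) := by
    have : cube c r = ⋂ i, {y : Rn n | |y i - c i| ≤ r / 2} := by
      ext y; simp [cube, Set.mem_iInter]
    rw [this]
    exact isClosed_iInter fun i => isClosed_le (by fun_prop) continuous_const
  refine IsCompact.of_isClosed_subset (isCompact_closedBall c (Real.sqrt (n * (r/2)^2)))
    hclosed ?_
  intro y hy
  simp only [Metric.mem_closedBall]
  rw [EuclideanSpace.dist_eq]
  apply Real.sqrt_le_sqrt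
  calc ∑ i, dist (y i) (c i) ^ 2 ≤ ∑ _i : Fin n, (r/2)^2 := by
        refine Finset.sum_le_sum fun i _ => ?_
        rw [Real.dist_eq]
        exact pow_le_pow_left₀ (abs_nonneg _) (hy i) 2
    _ = n * (r/2)^2 := by simp [Finset.sum_const, mul_comm]

/-- for `ω ∈ A₁` and `1 < p < ∞`, the weighted weak-type BMO condition
implies `b ∈ BMO(ω)` with `‖b‖_{BMO(ω)} ≤ C N`, `C` depending only on `p`. -/
theorem stmt18 (p : ℝ) (hp : 1 < p) :
    ∃ C : ℝ, 0 < C ∧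
      ∀ (n : ℕ) (A : ℝ) (ω b : Rn n → ℝ) (N : ℝ),
        IsA1 ω A → LocallyIntegrable b volume → 0 ≤ N →
        -- weak-type BMO condition with constant `N`
        (∀ (c : Rn n) (ρ : ℝ), 0 < ρ → ∀ l : ℝ, 0 < l →
            l * (wMeas ω {x ∈ cube c ρ | l * ω x < |b x - avg b c ρ|}) ^ (1 / p) ≤
              N * (wMeas ω (cube c ρ)) ^ (1 / p)) →
        ∀ (c : Rn n) (ρ : ℝ), 0 < ρ →
          (wMeas ω (cube c ρ))⁻¹ * ∫ x in cube c ρ, |b x - avg b c ρ| ≤ C * N := by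
  have hp0 : (0:ℝ) < p := lt_trans one_pos hp
  have hp1 : (0:ℝ) < p - 1 := by linarith
  refine ⟨p / (p - 1), div_pos hp0 hp1, ?_⟩
  intro n A ω b N hA1 hb hN hweak c ρ hρ
  obtain ⟨hωpos, hωloc, -, -⟩ := hA1
  have hQc : IsCompact (cube c ρ) := cube_isCompact c ρ
  have hQm : MeasurableSet (cube c ρ) := hQc.isClosed.measurableSet
  set Q : Set (Rn n) := cube c ρ with hQdef
  set m : ℝ := avg b c ρ with hmdef
  set g : Rn n → ℝ := fun x => |b x - m| with hgdef
  have hbQ : IntegrableOn b Q volume := hb.integrableOn_isCompact hQc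
  have hgQ : IntegrableOn g Q volume := by
    have : IntegrableOn (fun x => b x - m) Q volume :=
      hbQ.sub (integrableOn_const hQc.measure_lt_top.ne)
    exact this.abs
  have hωQ : IntegrableOn ω Q volume := hωloc.integrableOn_isCompact hQc
  set W : ℝ := wMeas ω Q with hWdef
  have hW0 : 0 ≤ W := integral_nonneg fun x => (hωpos x).le
  -- weak bound in real form
  set E : ℝ → Set (Rn n) := fun t => {x ∈ Q | t * ω x < |b x - m|} with hEdef
  have hE0 : ∀ t, 0 ≤ wMeas ω (E t) := fun t => integral_nonneg fun x => (hωpos x).le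
  have hEbound : ∀ t : ℝ, 0 < t → wMeas ω (E t) ≤ N ^ p * W / t ^ p := by
    intro t ht
    have h1 := hweak c ρ hρ t ht
    have he : 0 ≤ wMeas ω (E t) := hE0 t
    set e : ℝ := wMeas ω (E t) with hedef
    have h2 : e ^ (1/p) ≤ N * W ^ (1/p) / t := by
      rw [le_div_iff₀ ht, mul_comm]
      exact h1
    have h3 : (e ^ (1/p)) ^ p ≤ (N * W ^ (1/p) / t) ^ p :=
      Real.rpow_le_rpow (Real.rpow_nonneg he _) h2 hp0.le
    have hl : (e ^ (1/p)) ^ p = e := by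
      rw [← Real.rpow_mul he, one_div_mul_cancel hp0.ne', Real.rpow_one]
    have hr : (N * W ^ (1/p) / t) ^ p = N ^ p * W / t ^ p := by
      rw [Real.div_rpow (mul_nonneg hN (Real.rpow_nonneg hW0 _)) ht.le,
        Real.mul_rpow hN (Real.rpow_nonneg hW0 _), ← Real.rpow_mul hW0,
        one_div_mul_cancel hp0.ne', Real.rpow_one]
    rw [hl, hr] at h3
    exact h3
  -- measure-theoretic setup
  set ν : Measure (Rn n) := volume.restrict Q with hνdef
  set δ : Rn n → ENNReal := fun x => ENNReal.ofReal (ω x) with hδdef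
  set μ : Measure (Rn n) := ν.withDensity δ with hμdef
  set f : Rn n → ℝ := fun x => g x / ω x with hfdef
  have hgm : AEMeasurable g ν := hgQ.aestronglyMeasurable.aemeasurable
  have hωm : AEMeasurable ω ν := hωQ.aestronglyMeasurable.aemeasurable
  have hfm : AEMeasurable f ν := hgm.div hωm
  have hδm : AEMeasurable δ ν := hωm.ennreal_ofReal
  have hac : μ ≪ ν := withDensity_absolutelyContinuous ν δ
  have hacv : μ ≪ (volume : Measure (Rn n)) :=
    hac.trans (Measure.absolutelyContinuous_of_le Measure.restrict_le_self)
  have hωnn : 0 ≤ᵐ[ν] ω := ae_of_all _ fun x => (hωpos x).le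
  -- Step A
  have stepA : ENNReal.ofReal (∫ x in Q, g x) = ∫⁻ x, ENNReal.ofReal (f x) ∂μ := by
    rw [hμdef, lintegral_withDensity_eq_lintegral_mul₀ hδm hfm.ennreal_ofReal]
    have : ∀ x, (δ * fun x => ENNReal.ofReal (f x)) x = ENNReal.ofReal (g x) := by
      intro x
      simp only [Pi.mul_apply, hδdef, hfdef]
      rw [← ENNReal.ofReal_mul (hωpos x).le]
      congr 1
      rw [mul_comm, div_mul_cancel₀ _ (hωpos x).ne']
    rw [lintegral_congr this]
    exact ofReal_integral_eq_lintegral_ofReal hgQ (ae_of_all _ fun x => abs_nonneg _)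
  -- Step B : layercake
  have hfnn : 0 ≤ᵐ[μ] f :=
    ae_of_all _ fun x => div_nonneg (abs_nonneg _) (hωpos x).le
  have stepB := lintegral_eq_lintegral_meas_lt μ hfnn (hfm.mono_ac hac)
  -- Step C : measure bound
  have hμcompl : μ Qᶜ = 0 := by
    apply hac
    rw [hνdef, Measure.restrict_apply' hQm]
    simp
  have hμuniv : μ Set.univ = ENNReal.ofReal W := by
    rw [hμdef, withDensity_apply δ MeasurableSet.univ, Measure.restrict_univ]
    exact (ofReal_integral_eq_lintegral_ofReal hωQ hωnn).symm
  have stepC : ∀ t : ℝ, 0 < t → μ {x | t < f x} ≤ ENNReal.ofReal (wMeas ω (E t)) := by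
    intro t ht
    obtain ⟨f', hf'meas, hff'⟩ := hfm
    have h0 : (volume : Measure (Rn n)) ({x | f x ≠ f' x} ∩ Q) = 0 := by
      have := hff'
      rw [Filter.EventuallyEq, ae_iff] at this
      rw [hνdef, Measure.restrict_apply' hQm] at this
      exact this
    have hTm : MeasurableSet ({x | t < f' x} ∩ Q) :=
      (measurableSet_lt measurable_const hf'meas).inter hQm
    have haeeq : ({x : Rn n | t < f x} ∩ Q : Set (Rn n)) =ᵐ[(volume : Measure (Rn n))]
        ({x : Rn n | t < f' x} ∩ Q : Set (Rn n)) := by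
      rw [MeasureTheory.ae_eq_set]
      constructor
      · refine measure_mono_null ?_ h0
        rintro x ⟨⟨hx1, hx2⟩, hx3⟩
        exact ⟨fun hf => hx3 ⟨show t < f' x by rw [← hf]; exact hx1, hx2⟩, hx2⟩
      · refine measure_mono_null ?_ h0
        rintro x ⟨⟨hx1, hx2⟩, hx3⟩
        exact ⟨fun hf => hx3 ⟨show t < f x by rw [hf]; exact hx1, hx2⟩, hx2⟩
    have hsetseq : ({x : Rn n | t < f x} ∩ Q) = E t := by
      ext x
      simp only [Set.mem_inter_iff, Set.mem_setOf_eq, hEdef, Set.mem_sep_iff, hfdef, hgdef]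
      constructor
      · rintro ⟨h1, h2⟩
        exact ⟨h2, (lt_div_iff₀ (hωpos x)).1 h1⟩
      · rintro ⟨h1, h2⟩
        exact ⟨(lt_div_iff₀ (hωpos x)).2 h2, h1⟩
    calc μ {x | t < f x} ≤ μ (({x | t < f x} ∩ Q) ∪ Qᶜ) := by
          refine measure_mono fun x hx => ?_
          by_cases hq : x ∈ Q
          · exact Or.inl ⟨hx, hq⟩
          · exact Or.inr hq
      _ ≤ μ ({x | t < f x} ∩ Q) + μ Qᶜ := measure_union_le _ _
      _ = μ ({x | t < f x} ∩ Q) := by rw [hμcompl, add_zero]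
      _ = μ ({x | t < f' x} ∩ Q) := measure_congr (haeeq.filter_mono hacv.ae_le)
      _ = ∫⁻ x in {x | t < f' x} ∩ Q, δ x ∂ν := withDensity_apply δ hTm
      _ = ∫⁻ x in {x | t < f' x} ∩ Q, δ x ∂(volume : Measure (Rn n)) := by
          rw [hνdef, Measure.restrict_restrict hTm, Set.inter_assoc, Set.inter_self]
      _ = ENNReal.ofReal (∫ x in {x | t < f' x} ∩ Q, ω x) := by
          refine (ofReal_integral_eq_lintegral_ofReal
            (hωQ.mono_set Set.inter_subset_right) (ae_of_all _ fun x => (hωpos x).le)).symm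
      _ = ENNReal.ofReal (wMeas ω (E t)) := by
          rw [← hsetseq]
          congr 1
          exact setIntegral_congr_set haeeq.symm
  -- Step D : evaluate the layercake integral
  have stepD : ∫⁻ t in Set.Ioi (0:ℝ), μ {x | t < f x} ≤
      ENNReal.ofReal (p / (p - 1) * N * W) := by
    rcases eq_or_lt_of_le hN with hN0 | hN0
    · -- N = 0
      have hzero : ∀ t ∈ Set.Ioi (0:ℝ), μ {x | t < f x} ≤ (0 : ENNReal) := by
        intro t ht
        refine (stepC t ht).trans ?_
        have h1 := hEbound t ht
        rw [← hN0, Real.zero_rpow hp0.ne', zero_mul, zero_div] at h1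
        have heq : wMeas ω (E t) = 0 := le_antisymm h1 (hE0 t)
        rw [heq]
        simp
      calc ∫⁻ t in Set.Ioi (0:ℝ), μ {x | t < f x}
          ≤ ∫⁻ _t in Set.Ioi (0:ℝ), (0:ENNReal) :=
            setLIntegral_mono' measurableSet_Ioi hzero
        _ = 0 := by simp
        _ ≤ _ := zero_le
    · -- 0 < N
      rw [← Set.Ioc_union_Ioi_eq_Ioi hN,
        lintegral_union measurableSet_Ioi Set.Ioc_disjoint_Ioi_same]
      have h1 : ∫⁻ t in Set.Ioc (0:ℝ) N, μ {x | t < f x} ≤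
          ENNReal.ofReal W * ENNReal.ofReal N := by
        calc ∫⁻ t in Set.Ioc (0:ℝ) N, μ {x | t < f x}
            ≤ ∫⁻ _t in Set.Ioc (0:ℝ) N, ENNReal.ofReal W := by
              refine lintegral_mono fun t => ?_
              rw [← hμuniv]
              exact measure_mono (Set.subset_univ _)
          _ = ENNReal.ofReal W * volume (Set.Ioc (0:ℝ) N) := setLIntegral_const _ _
          _ = ENNReal.ofReal W * ENNReal.ofReal N := by
              rw [Real.volume_Ioc, sub_zero]
      have hint : IntegrableOn (fun t : ℝ => N ^ p * W * t ^ (-p)) (Set.Ioi N) volume := by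
        exact (integrableOn_Ioi_rpow_of_lt (by linarith) hN0).const_mul _
      have h2 : ∫⁻ t in Set.Ioi N, μ {x | t < f x} ≤
          ENNReal.ofReal (N * W / (p - 1)) := by
        calc ∫⁻ t in Set.Ioi N, μ {x | t < f x}
            ≤ ∫⁻ t in Set.Ioi N, ENNReal.ofReal (N ^ p * W * t ^ (-p)) := by
              refine setLIntegral_mono' measurableSet_Ioi fun t ht => ?_
              have ht0 : 0 < t := lt_trans hN0 ht
              refine (stepC t ht0).trans (ENNReal.ofReal_le_ofReal ?_)
              have := hEbound t ht0
              rwa [Real.rpow_neg ht0.le, ← div_eq_mul_inv]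
          _ = ENNReal.ofReal (∫ t in Set.Ioi N, N ^ p * W * t ^ (-p)) := by
              rw [ofReal_integral_eq_lintegral_ofReal hint
                ((ae_restrict_iff' measurableSet_Ioi).2 (ae_of_all _ fun t ht => by
                  have ht0 : (0:ℝ) < t := lt_trans hN0 ht
                  positivity))]
          _ ≤ ENNReal.ofReal (N * W / (p - 1)) := by
              apply ENNReal.ofReal_le_ofReal
              rw [MeasureTheory.integral_const_mul, integral_Ioi_rpow_of_lt (by linarith) hN0]
              have hpexp : p + (-p + 1) = 1 := by ring
              have hpow : N ^ p * N ^ (-p + 1) = N := by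
                rw [← Real.rpow_add hN0, hpexp, Real.rpow_one]
              have hne1 : p - 1 ≠ 0 := hp1.ne'
              have hne2 : -p + 1 ≠ 0 := by intro h; apply hne1; linarith
              have heq : N ^ p * W * (-N ^ (-p + 1) / (-p + 1)) = N * W / (p - 1) := by
                calc N ^ p * W * (-N ^ (-p + 1) / (-p + 1))
                    = N ^ p * N ^ (-p + 1) * W / (p - 1) := by
                      field_simp
                      ring
                  _ = N * W / (p - 1) := by rw [hpow]
              exact le_of_eq heq
      calc _ ≤ ENNReal.ofReal W * ENNReal.ofReal N + ENNReal.ofReal (N * W / (p - 1)) :=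
            add_le_add h1 h2
        _ = ENNReal.ofReal (W * N + N * W / (p - 1)) := by
            rw [← ENNReal.ofReal_mul hW0, ← ENNReal.ofReal_add (mul_nonneg hW0 hN)
              (div_nonneg (mul_nonneg hN hW0) hp1.le)]
        _ = ENNReal.ofReal (p / (p - 1) * N * W) := by
            congr 1
            field_simp
            ring
  -- combine
  have hkeyE : ENNReal.ofReal (∫ x in Q, g x) ≤ ENNReal.ofReal (p / (p - 1) * N * W) := by
    rw [stepA, stepB]; exact stepD
  have key : (∫ x in Q, g x) ≤ p / (p - 1) * N * W := by
    rwa [ENNReal.ofReal_le_ofReal_iff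
      (mul_nonneg (mul_nonneg (div_pos hp0 hp1).le hN) hW0)] at hkeyE
  have hg0 : 0 ≤ ∫ x in Q, g x := integral_nonneg fun x => abs_nonneg _
  rcases eq_or_lt_of_le hW0 with hW' | hW'
  · have hint0 : (∫ x in Q, g x) = 0 := le_antisymm (by rw [← hW'] at key; simpa using key) hg0
    rw [hint0, mul_zero]
    exact mul_nonneg (div_pos hp0 hp1).le hN
  · have h := mul_le_mul_of_nonneg_left key (inv_nonneg.2 hW0)
    calc W⁻¹ * (∫ x in Q, g x) ≤ W⁻¹ * (p / (p - 1) * N * W) := h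
      _ = p / (p - 1) * N := by field_simp
end
end
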